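/- Let (Ω, F, μ) be a probability space and let U, W, ε_M, ε_T, ε_Y be square-integrable real random variables, each with mean 0 and variance 1, such that Cov(U, W) = ρ and all other pairs among {U, W, ε_M, ε_T, ε_Y} have covariance 0. Let a, b, d, ρ be real numbers with a² ≤ 1, d² ≤ 1, b² ≤ 1, ρ² ≤ 1, and 1 − (ab)² > 0. Define M := b·U + √(1−b²)·ε_M, T := a·U + √(1−a²)·ε_T, and Y := d·W + √(1−d²)·ε_Y (the M-structure with c = 0). Then, whenever adρ ≠ 0, |β_T| / |Cov(T,Y)| = (1−b²)/(1−(ab)²) ≤ 1, i.e., the adjusted estimator has absolute bias no larger than the unadjusted one. -/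

import Mathlib

open MeasureTheory ProbabilityTheory

/-!
By bilinearity of the covariance, `Cov(T,Y) = adρ`, `Cov(Y,M) = bdρ`, `Cov(M,T) = ab` and
`Var T = Var M = 1`, so `β_T = (adρ - bdρ · ab) / (1 - (ab)²) = Cov(T,Y) · (1 - b²) / (1 - (ab)²)`,
and `(ab)² ≤ b²` bounds the factor by `1`.
-/

/-- Covariance of two real random variables: `Cov(X,Y) = E[XY] - E[X] E[Y]`. -/
noncomputable def covar {Ω : Type*} [MeasurableSpace Ω] (μ : Measure Ω) (X Y : Ω → ℝ) : ℝ :=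
  (∫ ω, X ω * Y ω ∂μ) - (∫ ω, X ω ∂μ) * (∫ ω, Y ω ∂μ)

/-- The population OLS coefficient on `T` when regressing `Y` on `(T, M)`. -/
noncomputable def betaT {Ω : Type*} [MeasurableSpace Ω] (μ : Measure Ω) (Y T M : Ω → ℝ) : ℝ :=
  (covar μ Y T * variance M μ - covar μ Y M * covar μ M T) /
    (variance T μ * variance M μ - (covar μ M T) ^ 2)

section covar

variable {Ω : Type*} [MeasurableSpace Ω] {μ : Measure Ω}

lemma covar_comm (X Y : Ω → ℝ) : covar μ X Y = covar μ Y X := by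
  simp only [covar, mul_comm]

variable [IsProbabilityMeasure μ]

lemma covar_eq_covariance {X Y : Ω → ℝ} (hX : MemLp X 2 μ) (hY : MemLp Y 2 μ) :
    covar μ X Y = cov[X, Y; μ] := by
  rw [covariance_eq_sub hX hY]
  rfl

lemma covar_self {X : Ω → ℝ} (hX : MemLp X 2 μ) : covar μ X X = variance X μ := by
  rw [covar_eq_covariance hX hX, covariance_self hX.aemeasurable]

lemma covar_linComb {X₁ X₂ Y₁ Y₂ : Ω → ℝ} (hX₁ : MemLp X₁ 2 μ) (hX₂ : MemLp X₂ 2 μ)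
    (hY₁ : MemLp Y₁ 2 μ) (hY₂ : MemLp Y₂ 2 μ) (c₁ c₂ c₃ c₄ : ℝ) :
    covar μ (fun ω => c₁ * X₁ ω + c₂ * X₂ ω) (fun ω => c₃ * Y₁ ω + c₄ * Y₂ ω)
      = c₁ * c₃ * covar μ X₁ Y₁ + c₁ * c₄ * covar μ X₁ Y₂
        + c₂ * c₃ * covar μ X₂ Y₁ + c₂ * c₄ * covar μ X₂ Y₂ := by
  have hX := (hX₁.const_mul c₁).add (hX₂.const_mul c₂)
  have hY := (hY₁.const_mul c₃).add (hY₂.const_mul c₄)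
  change covar μ ((fun ω => c₁ * X₁ ω) + fun ω => c₂ * X₂ ω)
    ((fun ω => c₃ * Y₁ ω) + fun ω => c₄ * Y₂ ω) = _
  rw [covar_eq_covariance hX hY, covariance_add_left (hX₁.const_mul c₁) (hX₂.const_mul c₂) hY,
    covariance_add_right (hX₁.const_mul c₁) (hY₁.const_mul c₃) (hY₂.const_mul c₄),
    covariance_add_right (hX₂.const_mul c₂) (hY₁.const_mul c₃) (hY₂.const_mul c₄)]
  simp only [covariance_const_mul_left, covariance_const_mul_right,
    covar_eq_covariance hX₁ hY₁, covar_eq_covariance hX₁ hY₂, covar_eq_covariance hX₂ hY₁,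
    covar_eq_covariance hX₂ hY₂]
  ring

lemma variance_mul_add_sqrt_one_sub_sq_mul {X ε : Ω → ℝ} (hX : MemLp X 2 μ) (hε : MemLp ε 2 μ)
    (hXv : variance X μ = 1) (hεv : variance ε μ = 1) (hXε : covar μ X ε = 0) {a : ℝ}
    (ha : a ^ 2 ≤ 1) :
    variance (fun ω => a * X ω + √(1 - a ^ 2) * ε ω) μ = 1 := by
  have hmix : MemLp (fun ω => a * X ω + √(1 - a ^ 2) * ε ω) 2 μ :=
    (hX.const_mul a).add (hε.const_mul _)
  rw [← covar_self hmix, covar_linComb hX hε hX hε, covar_self hX, covar_self hε, hXv, hεv,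
    covar_comm ε X, hXε]
  linear_combination Real.mul_self_sqrt (sub_nonneg.mpr ha)

end covar

theorem stmt6_general {Ω : Type*} [MeasurableSpace Ω] (μ : Measure Ω) [IsProbabilityMeasure μ]
    (U W εM εT εY : Ω → ℝ)
    (hU2 : MemLp U 2 μ) (hW2 : MemLp W 2 μ) (hεM2 : MemLp εM 2 μ)
    (hεT2 : MemLp εT 2 μ) (hεY2 : MemLp εY 2 μ)
    (hUv : variance U μ = 1) (hεMv : variance εM μ = 1)
    (hεTv : variance εT μ = 1)
    (a b d ρ : ℝ)
    (hUW : covar μ U W = ρ)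
    (hUεM : covar μ U εM = 0) (hUεT : covar μ U εT = 0) (hUεY : covar μ U εY = 0)
    (hWεM : covar μ W εM = 0) (hWεT : covar μ W εT = 0)
    (hεMεT : covar μ εM εT = 0) (hεMεY : covar μ εM εY = 0) (hεTεY : covar μ εT εY = 0)
    (ha : a ^ 2 ≤ 1) (hb : b ^ 2 ≤ 1)
    (hpos : 0 < 1 - (a * b) ^ 2)
    (M T Y : Ω → ℝ)
    (hM : M = fun ω => b * U ω + Real.sqrt (1 - b ^ 2) * εM ω)
    (hT : T = fun ω => a * U ω + Real.sqrt (1 - a ^ 2) * εT ω)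
    (hY : Y = fun ω => d * W ω + Real.sqrt (1 - d ^ 2) * εY ω)
    (hadρ : a * d * ρ ≠ 0) :
    |betaT μ Y T M| / |covar μ T Y| = (1 - b ^ 2) / (1 - (a * b) ^ 2) ∧
      (1 - b ^ 2) / (1 - (a * b) ^ 2) ≤ 1 := by
  have cTY : covar μ T Y = a * d * ρ := by
    rw [hT, hY, covar_linComb hU2 hεT2 hW2 hεY2, hUW, hUεY, covar_comm εT W, hWεT, hεTεY]
    ring
  have cYM : covar μ Y M = d * b * ρ := by
    rw [hY, hM, covar_linComb hW2 hεY2 hU2 hεM2, covar_comm W U, hUW, hWεM, covar_comm εY U,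
      hUεY, covar_comm εY εM, hεMεY]
    ring
  have cMT : covar μ M T = a * b := by
    rw [hM, hT, covar_linComb hU2 hεM2 hU2 hεT2, covar_self hU2, hUv, hUεT, covar_comm εM U,
      hUεM, hεMεT]
    ring
  have vT : variance T μ = 1 :=
    hT ▸ variance_mul_add_sqrt_one_sub_sq_mul hU2 hεT2 hUv hεTv hUεT ha
  have vM : variance M μ = 1 :=
    hM ▸ variance_mul_add_sqrt_one_sub_sq_mul hU2 hεM2 hUv hεMv hUεM hb
  have hβ : betaT μ Y T M = covar μ T Y * ((1 - b ^ 2) / (1 - (a * b) ^ 2)) := by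
    rw [betaT, covar_comm Y T, cTY, cYM, cMT, vT, vM]
    field_simp
  have hratio : 0 ≤ (1 - b ^ 2) / (1 - (a * b) ^ 2) := div_nonneg (by linarith) hpos.le
  refine ⟨?_, div_le_one_of_le₀ (by nlinarith [sq_nonneg b]) hpos.le⟩
  rw [hβ, abs_mul, abs_of_nonneg hratio, mul_div_cancel_left₀ _ (abs_ne_zero.mpr (cTY ▸ hadρ))]

/-- M-structure with `c = 0` (W is not a cause of M): the adjusted estimator has
absolute bias no larger than the unadjusted one. -/
theorem stmt6 {Ω : Type*} [MeasurableSpace Ω] (μ : Measure Ω) [IsProbabilityMeasure μ]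
    (U W εM εT εY : Ω → ℝ)
    (hU2 : MemLp U 2 μ) (hW2 : MemLp W 2 μ) (hεM2 : MemLp εM 2 μ)
    (hεT2 : MemLp εT 2 μ) (hεY2 : MemLp εY 2 μ)
    (hUm : ∫ ω, U ω ∂μ = 0) (hWm : ∫ ω, W ω ∂μ = 0) (hεMm : ∫ ω, εM ω ∂μ = 0)
    (hεTm : ∫ ω, εT ω ∂μ = 0) (hεYm : ∫ ω, εY ω ∂μ = 0)
    (hUv : variance U μ = 1) (hWv : variance W μ = 1) (hεMv : variance εM μ = 1)
    (hεTv : variance εT μ = 1) (hεYv : variance εY μ = 1)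
    (a b d ρ : ℝ)
    (hUW : covar μ U W = ρ)
    (hUεM : covar μ U εM = 0) (hUεT : covar μ U εT = 0) (hUεY : covar μ U εY = 0)
    (hWεM : covar μ W εM = 0) (hWεT : covar μ W εT = 0) (hWεY : covar μ W εY = 0)
    (hεMεT : covar μ εM εT = 0) (hεMεY : covar μ εM εY = 0) (hεTεY : covar μ εT εY = 0)
    (ha : a ^ 2 ≤ 1) (hd : d ^ 2 ≤ 1) (hb : b ^ 2 ≤ 1) (hρ : ρ ^ 2 ≤ 1)
    (hpos : 0 < 1 - (a * b) ^ 2)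
    (M T Y : Ω → ℝ)
    (hM : M = fun ω => b * U ω + Real.sqrt (1 - b ^ 2) * εM ω)
    (hT : T = fun ω => a * U ω + Real.sqrt (1 - a ^ 2) * εT ω)
    (hY : Y = fun ω => d * W ω + Real.sqrt (1 - d ^ 2) * εY ω)
    (hadρ : a * d * ρ ≠ 0) :
    |betaT μ Y T M| / |covar μ T Y| = (1 - b ^ 2) / (1 - (a * b) ^ 2) ∧
      (1 - b ^ 2) / (1 - (a * b) ^ 2) ≤ 1 :=
  stmt6_general μ U W εM εT εY hU2 hW2 hεM2 hεT2 hεY2 hUv hεMv hεTv a b d ρ hUW hUεM hUεT hUεY hWεM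
    hWεT hεMεT hεMεY hεTεY ha hb hpos M T Y hM hT hY hadρ
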